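/- arXiv:cs/0610103 — 6 statements merged into one kernel-verified Lean document; each statement's English description precedes it below -/
import Mathlib

section
/- The function P ↦ log(1 + h_M·P) − log(1 + h_E·P) is concave in P on [0,∞) whenever h_M ≥ h_E ≥ 0. -/
/-! The derivative of `P ↦ log(1 + h_M P) − log(1 + h_E P)` is
`(h_M − h_E) / ((1 + h_M P)(1 + h_E P))`: a nonnegative constant over a product of two positive
nondecreasing factors, hence antitone on `[0, ∞)`, which gives concavity. -/

open Real Set

lemma hasDerivAt_log_one_add_mul {c x : ℝ} (h : 0 < 1 + c * x) :
    HasDerivAt (fun P => log (1 + c * P)) (c / (1 + c * x)) x := by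
  simpa using (((hasDerivAt_id x).const_mul c).const_add 1).log h.ne'

lemma div_one_add_mul_sub_div_one_add_mul {a b x : ℝ} (ha : 1 + a * x ≠ 0) (hb : 1 + b * x ≠ 0) :
    a / (1 + a * x) - b / (1 + b * x) = (a - b) / ((1 + a * x) * (1 + b * x)) := by
  rw [div_sub_div _ _ ha hb]
  ring

lemma hasDerivAt_log_one_add_mul_sub_log_one_add_mul {a b x : ℝ} (ha : 0 < 1 + a * x)
    (hb : 0 < 1 + b * x) :
    HasDerivAt (fun P => log (1 + a * P) - log (1 + b * P))
      ((a - b) / ((1 + a * x) * (1 + b * x))) x := by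
  rw [← div_one_add_mul_sub_div_one_add_mul ha.ne' hb.ne']
  exact (hasDerivAt_log_one_add_mul ha).sub (hasDerivAt_log_one_add_mul hb)

lemma antitoneOn_div_one_add_mul_mul_one_add_mul {a b k : ℝ} (ha : 0 ≤ a) (hb : 0 ≤ b)
    (hk : 0 ≤ k) : AntitoneOn (fun x => k / ((1 + a * x) * (1 + b * x))) (Ici 0) := by
  intro x (hx : 0 ≤ x) y (hy : 0 ≤ y) hxy
  dsimp only
  gcongr

/-- The instantaneous secrecy rate `P ↦ log(1 + h_M·P) − log(1 + h_E·P)` is concave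
in the power `P` on `[0,∞)` whenever `h_M ≥ h_E ≥ 0`. -/
theorem secrecy_rate_concave (hM hE : ℝ) (hE_nonneg : 0 ≤ hE) (h_le : hE ≤ hM) :
    ConcaveOn ℝ (Set.Ici (0 : ℝ))
      (fun P => Real.log (1 + hM * P) - Real.log (1 + hE * P)) := by
  have hM_nonneg : 0 ≤ hM := hE_nonneg.trans h_le
  have hderiv : ∀ x ∈ Ici (0 : ℝ), HasDerivAt
      (fun P => log (1 + hM * P) - log (1 + hE * P))
      ((hM - hE) / ((1 + hM * x) * (1 + hE * x))) x := fun x (hx : 0 ≤ x) =>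
    hasDerivAt_log_one_add_mul_sub_log_one_add_mul (by positivity) (by positivity)
  have hderiv_anti :=
    (antitoneOn_div_one_add_mul_mul_one_add_mul hM_nonneg hE_nonneg (sub_nonneg.2 h_le)).mono
      (interior_subset (s := Ici (0 : ℝ)))
  refine AntitoneOn.concaveOn_of_deriv (convex_Ici 0) (HasDerivAt.continuousOn hderiv)
    (fun x hx => (hderiv x (interior_subset hx)).differentiableAt.differentiableWithinAt) ?_
  exact hderiv_anti.congr fun x hx => (hderiv x (interior_subset hx)).deriv.symm
end

section
/- The derivative of P ↦ log(1+h_M·P) − log(1+h_E·P) at P = 0 equals h_M − h_E, and if h_M − h_E ≤ λ then log(1+h_M·P) − log(1+h_E·P) − λ·P ≤ 0 for all P ≥ 0, so the optimal power allocation is P = 0. -/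
open Real

theorem hasDerivAt_log_one_add_mul_zero (a : ℝ) :
    HasDerivAt (fun x => log (1 + a * x)) a 0 := by
  have h : HasDerivAt (fun x : ℝ => 1 + a * x) a 0 := by
    simpa using ((hasDerivAt_id (0 : ℝ)).const_mul a).const_add 1
  simpa using h.log (by norm_num)

theorem log_sub_log_le_div {x y : ℝ} (hx : 0 < x) (hy : 0 < y) :
    log x - log y ≤ (x - y) / y := by
  calc log x - log y = log (x / y) := (log_div hx.ne' hy.ne').symm
    _ ≤ x / y - 1 := log_le_sub_one_of_pos (div_pos hx hy)
    _ = (x - y) / y := by rw [div_sub_one hy.ne']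

theorem log_one_add_mul_sub_log_one_add_mul_le {a b x : ℝ} (hb : 0 ≤ b) (hba : b ≤ a)
    (hx : 0 ≤ x) : log (1 + a * x) - log (1 + b * x) ≤ (a - b) * x := by
  have hbx : 1 ≤ 1 + b * x := le_add_of_nonneg_right (mul_nonneg hb hx)
  have hax : 1 ≤ 1 + a * x := hbx.trans (by gcongr)
  calc log (1 + a * x) - log (1 + b * x) ≤ (1 + a * x - (1 + b * x)) / (1 + b * x) :=
        log_sub_log_le_div (by linarith) (by linarith)
    _ = (a - b) * x / (1 + b * x) := by ring
    _ ≤ (a - b) * x := div_le_self (mul_nonneg (sub_nonneg.mpr hba) hx) hbx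

theorem zero_power_threshold_general (hM hE lam : ℝ) (hE_pos : 0 < hE) (h_lt : hE < hM) :
    HasDerivAt (fun P => Real.log (1 + hM * P) - Real.log (1 + hE * P))
      (hM - hE) 0 ∧
    (hM - hE ≤ lam → ∀ P : ℝ, 0 ≤ P →
      Real.log (1 + hM * P) - Real.log (1 + hE * P) - lam * P ≤ 0) := by
  refine ⟨(hasDerivAt_log_one_add_mul_zero hM).sub (hasDerivAt_log_one_add_mul_zero hE),
    fun hle P hP => ?_⟩
  have hgap := log_one_add_mul_sub_log_one_add_mul_le hE_pos.le h_lt.le hP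
  have hlin : (hM - hE) * P ≤ lam * P := mul_le_mul_of_nonneg_right hle hP
  linarith

/-- The derivative of `P ↦ log(1+h_M P) − log(1+h_E P)` at `P = 0` equals `h_M − h_E`,
and if `h_M − h_E ≤ λ` then `log(1+h_M P) − log(1+h_E P) − λP ≤ 0` for all `P ≥ 0`,
so the optimal power allocation is `P = 0`. -/
theorem zero_power_threshold (hM hE lam : ℝ) (hE_pos : 0 < hE) (h_lt : hE < hM)
    (hlam : 0 < lam) :
    HasDerivAt (fun P => Real.log (1 + hM * P) - Real.log (1 + hE * P))
      (hM - hE) 0 ∧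
    (hM - hE ≤ lam → ∀ P : ℝ, 0 ≤ P →
      Real.log (1 + hM * P) - Real.log (1 + hE * P) - lam * P ≤ 0) :=
  zero_power_threshold_general hM hE lam hE_pos h_lt
end

section
/- If h is a random variable with exponential distribution of mean γ̄ > 0 and P > 0, then E[log(1 + h·P)] = exp(1/(γ̄·P))·Ei(1/(γ̄·P)), where Ei(x) = ∫_x^∞ e^{−t}/t dt. -/
/-! Substituting `y = x P` turns the expectation into `∫₀^∞ a e^{-a y} log (1 + y) dy` with
`a = 1 / (γ̄ P)`. Its integrand is minus the derivative of
`G y = e^{-a y} log (1 + y) + e^a Ei (a (1 + y))`: the derivative of the `Ei` term exactly cancels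
the term `e^{-a y} / (1 + y)` from differentiating the logarithm. Since `G → 0` at infinity, the
integral equals `G 0 = e^a Ei a`. -/

open MeasureTheory ProbabilityTheory

/-- The exponential integral `Ei(x) = ∫_x^∞ e^{−t}/t dt` for `x > 0`. -/
noncomputable def Ei (x : ℝ) : ℝ := ∫ t in Set.Ioi x, Real.exp (-t) / t

open Real Set Filter
open scoped Topology

lemma integrableOn_exp_neg_div_Ioi {a : ℝ} (ha : 0 < a) :
    IntegrableOn (fun t => exp (-t) / t) (Ioi a) := by
  refine ((exp_neg_integrableOn_Ioi a one_pos).div_const a).mono' ?_ ?_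
  · exact (by fun_prop : Measurable fun t : ℝ => exp (-t) / t).aestronglyMeasurable
  · filter_upwards [ae_restrict_mem measurableSet_Ioi] with t (ht : a < t)
    rw [norm_div, norm_of_nonneg (exp_pos _).le, norm_of_nonneg (ha.trans ht).le, neg_one_mul]
    gcongr

lemma hasDerivAt_Ei {y : ℝ} (hy : 0 < y) : HasDerivAt Ei (-(exp (-y) / y)) y := by
  have hcont : ContinuousOn (fun t => exp (-t) / t) (Ioi 0) :=
    fun t ht => ((by fun_prop : Continuous fun t : ℝ => exp (-t)).continuousAt.div
      continuousAt_id (ne_of_gt ht)).continuousWithinAt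
  have hprim : HasDerivAt (fun z => ∫ t in y..z, exp (-t) / t) (exp (-y) / y) y :=
    intervalIntegral.integral_hasDerivAt_right .refl
      (hcont.stronglyMeasurableAtFilter isOpen_Ioi y hy)
      (hcont.continuousAt (Ioi_mem_nhds hy))
  refine ((hasDerivAt_const y (Ei y)).sub hprim).congr_deriv (zero_sub _)
    |>.congr_of_eventuallyEq ?_
  filter_upwards [Ioi_mem_nhds hy] with z (hz : 0 < z)
  show Ei z = Ei y - ∫ t in y..z, exp (-t) / t
  rw [Ei, Ei, ← intervalIntegral.integral_Ioi_sub_Ioi' (integrableOn_exp_neg_div_Ioi hy)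
    (integrableOn_exp_neg_div_Ioi hz), sub_sub_cancel]

lemma tendsto_Ei_atTop : Tendsto Ei atTop (𝓝 0) :=
  tendsto_integral_Ioi_zero tendsto_id

lemma hasDerivAt_exp_neg_mul_mul_log_add_exp_mul_Ei {a y : ℝ} (ha : 0 < a) (hy : 0 < 1 + y) :
    HasDerivAt (fun y => exp (-(a * y)) * log (1 + y) + exp a * Ei (a * (1 + y)))
      (-(a * exp (-(a * y)) * log (1 + y))) y := by
  have hlog : HasDerivAt (fun y => log (1 + y)) (1 / (1 + y)) y := by
    simpa using ((hasDerivAt_id y).const_add 1).log hy.ne'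
  have hexp : HasDerivAt (fun y => exp (-(a * y))) (-a * exp (-(a * y))) y := by
    simpa [mul_comm] using ((hasDerivAt_id y).const_mul a).neg.exp
  have hEi : HasDerivAt (fun y => Ei (a * (1 + y)))
      (-(exp (-(a * (1 + y))) / (a * (1 + y))) * a) y := by
    exact (hasDerivAt_Ei (mul_pos ha hy)).comp y
      (by simpa using ((hasDerivAt_id y).const_add 1).const_mul a)
  refine ((hexp.mul hlog).add (hEi.const_mul (exp a))).congr_deriv ?_
  rw [show exp (-(a * (1 + y))) = exp (-(a * y)) / exp a by rw [← exp_sub]; ring_nf]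
  field_simp
  ring

lemma tendsto_exp_neg_mul_mul_log_one_add {a : ℝ} (ha : 0 < a) :
    Tendsto (fun y => exp (-(a * y)) * log (1 + y)) atTop (𝓝 0) := by
  refine squeeze_zero' ?_ ?_ (by simpa using tendsto_rpow_mul_exp_neg_mul_atTop_nhds_zero 1 a ha)
  · filter_upwards [eventually_ge_atTop 0] with y hy
    exact mul_nonneg (exp_pos _).le (log_nonneg (by linarith))
  · filter_upwards [eventually_ge_atTop 0] with y hy
    rw [mul_comm]
    gcongr
    linarith [log_le_sub_one_of_pos (show 0 < 1 + y by linarith)]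

theorem integral_Ioi_mul_exp_neg_mul_mul_log_one_add {a : ℝ} (ha : 0 < a) :
    ∫ y in Ioi 0, a * exp (-(a * y)) * log (1 + y) = exp a * Ei a := by
  have hderiv (y : ℝ) (hy : y ∈ Ici 0) := hasDerivAt_exp_neg_mul_mul_log_add_exp_mul_Ei ha
    (show 0 < 1 + y by linarith [hy.out])
  have hnonpos (y : ℝ) (hy : y ∈ Ioi 0) : -(a * exp (-(a * y)) * log (1 + y)) ≤ 0 := by
    have := log_nonneg (show 1 ≤ 1 + y by linarith [hy.out])
    simp only [neg_nonpos]
    positivity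
  have hEi : Tendsto (fun y => exp a * Ei (a * (1 + y))) atTop (𝓝 0) := by
    simpa using (tendsto_Ei_atTop.comp
      ((tendsto_atTop_add_const_left _ 1 tendsto_id).const_mul_atTop ha)).const_mul (exp a)
  have := integral_Ioi_of_hasDerivAt_of_nonpos' hderiv hnonpos
    (by simpa using (tendsto_exp_neg_mul_mul_log_one_add ha).add hEi)
  simpa [integral_neg] using this

lemma integral_expMeasure {r : ℝ} (hr : 0 < r) (f : ℝ → ℝ) :
    ∫ x, f x ∂expMeasure r = ∫ x in Ioi 0, r * exp (-(r * x)) * f x := by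
  rw [expMeasure, gammaMeasure, integral_withDensity_eq_integral_toReal_smul (f := gammaPDF 1 r)
      (measurable_gammaPDFReal 1 r).ennreal_ofReal (ae_of_all _ fun _ => ENNReal.ofReal_lt_top),
    ← integral_Ici_eq_integral_Ioi, ← integral_indicator measurableSet_Ici]
  congr with x
  by_cases hx : 0 ≤ x
  · simp [gammaPDF, gammaPDFReal, hx, hr.le, (exp_pos _).le]
  · simp [gammaPDF, gammaPDFReal, hx]

theorem integral_log_one_add_mul_expMeasure {r P : ℝ} (hr : 0 < r) (hP : 0 < P) :
    ∫ x, log (1 + x * P) ∂expMeasure r = exp (r / P) * Ei (r / P) := by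
  rw [integral_expMeasure hr, ← integral_Ioi_mul_exp_neg_mul_mul_log_one_add (div_pos hr hP)]
  calc ∫ x in Ioi 0, r * exp (-(r * x)) * log (1 + x * P)
      = P • ∫ x in Ioi 0, r / P * exp (-(r / P * (P * x))) * log (1 + P * x) := by
        rw [smul_eq_mul, ← integral_const_mul]
        refine setIntegral_congr_fun measurableSet_Ioi fun x _ => ?_
        field_simp
    _ = _ := by
      simpa using integral_comp_mul_left_Ioi'
        (fun y => r / P * exp (-(r / P * y)) * log (1 + y)) 0 hP

/-- If `h` is a random variable with exponential distribution of mean `γ̄ > 0`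
(i.e. rate `1/γ̄`) and `P > 0`, then `E[log(1 + h·P)] = e^{1/(γ̄P)}·Ei(1/(γ̄P))`. -/
theorem expectation_log_exponential {Ω : Type*} [MeasureSpace Ω]
    (h : Ω → ℝ) (γ P : ℝ) (hγ : 0 < γ) (hP : 0 < P)
    (hlaw : Measure.map h ℙ = expMeasure (1/γ)) :
    ∫ ω, Real.log (1 + h ω * P) = Real.exp (1/(γ*P)) * Ei (1/(γ*P)) := by
  have hr : 0 < 1 / γ := by positivity
  have hh : AEMeasurable h ℙ := .of_map_ne_zero <| by
    rw [hlaw]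
    exact (isProbabilityMeasure_expMeasure hr).ne_zero
  have hg : Measurable fun x : ℝ => log (1 + x * P) := by fun_prop
  rw [← integral_map hh hg.aestronglyMeasurable, hlaw,
    integral_log_one_add_mul_expMeasure hr hP, div_div]
end

section
/- If h_M and h_E are independent exponential random variables with means γ̄_M and γ̄_E, then for every P̄ > 0 the receiver-CSI-only secrecy rate R = E[log(1+h_M·P̄)] − E[log(1+h_E·P̄)] satisfies R > 0 if γ̄_M > γ̄_E and R ≤ 0 if γ̄_M ≤ γ̄_E. Consequently [R]⁺ = 0 whenever γ̄_E ≥ γ̄_M. -/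
open MeasureTheory ProbabilityTheory Real Set

/-!
An exponential variable with mean `γ` has the law of `γ * Y` with `Y ∼ Exp(1)`, so each expected
rate equals `F (γ * P̄)` where `F c = 𝔼[log (1 + c * Y)]`. Since `Y > 0` almost surely, `F` is
strictly increasing on `[0, ∞)`, and the sign of `R = F (γ_M P̄) - F (γ_E P̄)` is that of
`γ_M - γ_E`.
-/

lemma expMeasure_eq_withDensity (r : ℝ) :
    expMeasure r = volume.withDensity (exponentialPDF r) := rfl

lemma integral_pos_of_ae_pos {α : Type*} [MeasurableSpace α] {μ : Measure α} [NeZero μ]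
    {f : α → ℝ} (hf : ∀ᵐ x ∂μ, 0 < f x) (hfi : Integrable f μ) : 0 < ∫ x, f x ∂μ := by
  rw [integral_pos_iff_support_of_nonneg_ae (hf.mono fun _ ↦ le_of_lt) hfi]
  have hsupp : Function.support f =ᵐ[μ] univ :=
    ae_eq_univ.2 (ae_iff.1 (hf.mono fun _ hx ↦ hx.ne'))
  rw [measure_congr hsupp]
  exact Measure.measure_univ_pos.2 (NeZero.ne μ)

lemma map_const_mul_expMeasure {r c : ℝ} (hr : 0 < r) (hc : 0 < c) :
    (expMeasure r).map (c * ·) = expMeasure (r / c) := by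
  have := isProbabilityMeasure_expMeasure hr
  have := isProbabilityMeasure_expMeasure (div_pos hr hc)
  have hm : Measurable (c * · : ℝ → ℝ) := measurable_const_mul c
  have := Measure.isProbabilityMeasure_map (μ := expMeasure r) hm.aemeasurable
  refine Measure.eq_of_cdf _ _ (StieltjesFunction.ext fun x ↦ ?_)
  have hpre : (c * · : ℝ → ℝ) ⁻¹' Iic x = Iic (x / c) := by
    ext y; simp [le_div_iff₀ hc, mul_comm]
  rw [cdf_eq_real, measureReal_def, Measure.map_apply hm measurableSet_Iic, hpre,
    ← measureReal_def, ← cdf_eq_real, cdf_expMeasure_eq hr, cdf_expMeasure_eq (div_pos hr hc)]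
  simp only [le_div_iff₀ hc, zero_mul, mul_div_assoc', div_mul_eq_mul_div]

lemma ae_pos_expMeasure (r : ℝ) : ∀ᵐ y ∂(expMeasure r), 0 < y := by
  rw [ae_iff]
  simp only [not_lt, Iic_def]
  rw [expMeasure_eq_withDensity, withDensity_apply _ measurableSet_Iic,
    ← setLIntegral_congr Iio_ae_eq_Iic]
  exact lintegral_exponentialPDF_of_nonpos le_rfl

lemma integrable_id_expMeasure {r : ℝ} (hr : 0 < r) : Integrable id (expMeasure r) := by
  rw [expMeasure_eq_withDensity, integrable_withDensity_iff
    (show Measurable (exponentialPDF r) from (measurable_exponentialPDFReal r).ennreal_ofReal)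
    (.of_forall fun _ ↦ ENNReal.ofReal_lt_top)]
  have hdens : (fun y ↦ id y * (exponentialPDF r y).toReal) =
      (Ioi 0).indicator (fun y ↦ r * (y ^ (1 : ℝ) * rexp (-r * y ^ (1 : ℝ)))) := by
    ext y
    rcases lt_or_ge 0 y with hy | hy
    · rw [indicator_of_mem (mem_Ioi.2 hy), exponentialPDF_of_nonneg hy.le,
        ENNReal.toReal_ofReal (by positivity), rpow_one]
      simp only [id]; ring_nf
    · rw [indicator_of_notMem (notMem_Ioi.2 hy)]
      rcases hy.lt_or_eq with hy | rfl
      · simp [exponentialPDF_of_neg hy]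
      · simp
  rw [hdens, integrable_indicator_iff measurableSet_Ioi]
  exact (integrableOn_rpow_mul_exp_neg_mul_rpow (by norm_num) one_pos hr).const_mul r

lemma integrable_log_one_add_mul_expMeasure {r c : ℝ} (hr : 0 < r) (hc : 0 ≤ c) :
    Integrable (fun y ↦ log (1 + c * y)) (expMeasure r) := by
  refine ((integrable_id_expMeasure hr).const_mul c).mono'
    (measurable_log.comp ((measurable_const_mul c).const_add 1)).aestronglyMeasurable ?_
  filter_upwards [ae_pos_expMeasure r] with y hy
  have hcy : 0 ≤ c * y := mul_nonneg hc hy.le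
  rw [norm_of_nonneg (log_nonneg (by linarith)), id]
  linarith [log_le_sub_one_of_pos (by linarith : 0 < 1 + c * y)]

lemma strictMonoOn_integral_log_one_add_mul_expMeasure {r : ℝ} (hr : 0 < r) :
    StrictMonoOn (fun c ↦ ∫ y, log (1 + c * y) ∂(expMeasure r)) (Ici 0) := by
  have := isProbabilityMeasure_expMeasure hr
  intro a ha b hb hab
  have hia := integrable_log_one_add_mul_expMeasure hr ha
  have hib := integrable_log_one_add_mul_expMeasure hr hb
  rw [← sub_pos, ← integral_sub hib hia]
  refine integral_pos_of_ae_pos ?_ (hib.sub hia)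
  filter_upwards [ae_pos_expMeasure r] with y hy
  have hay : 0 ≤ a * y := mul_nonneg ha hy.le
  rw [sub_pos]
  exact log_lt_log (by linarith) (by gcongr)

lemma integral_comp_of_map_eq_expMeasure {Ω : Type*} [MeasurableSpace Ω] {μ : Measure Ω}
    {X : Ω → ℝ} {γ : ℝ} (hγ : 0 < γ) (hX : μ.map X = expMeasure (1 / γ))
    {f : ℝ → ℝ} (hf : Measurable f) :
    ∫ ω, f (X ω) ∂μ = ∫ y, f (γ * y) ∂(expMeasure 1) := by
  have hXm : AEMeasurable X μ := .of_map_ne_zero <| by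
    rw [hX]; exact (isProbabilityMeasure_expMeasure (by positivity)).ne_zero
  rw [← integral_map hXm hf.aestronglyMeasurable, hX, ← map_const_mul_expMeasure one_pos hγ,
    integral_map (measurable_const_mul γ).aemeasurable hf.aestronglyMeasurable]

theorem receiver_csi_rate_sign_general {Ω : Type*} [MeasureSpace Ω] [IsProbabilityMeasure (ℙ : Measure Ω)]
    (hM hE : Ω → ℝ) (γM γE Pbar : ℝ) (hγM : 0 < γM) (hγE : 0 < γE) (hPbar : 0 < Pbar)
    (hlawM : Measure.map hM ℙ = expMeasure (1/γM))
    (hlawE : Measure.map hE ℙ = expMeasure (1/γE))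
    (R : ℝ)
    (hR : R = (∫ ω, Real.log (1 + hM ω * Pbar)) - ∫ ω, Real.log (1 + hE ω * Pbar)) :
    (γE < γM → 0 < R) ∧ (γM ≤ γE → R ≤ 0) ∧ (γM ≤ γE → max R 0 = 0) := by
  set F := fun c ↦ ∫ y, log (1 + c * y) ∂(expMeasure 1)
  have hF : StrictMonoOn F (Ici 0) := strictMonoOn_integral_log_one_add_mul_expMeasure one_pos
  have hmeas : Measurable fun x ↦ log (1 + x * Pbar) :=
    measurable_log.comp ((measurable_mul_const Pbar).const_add 1)
  have hrate (X : Ω → ℝ) (γ : ℝ) (hγ : 0 < γ) (hX : Measure.map X ℙ = expMeasure (1 / γ)) :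
      ∫ ω, log (1 + X ω * Pbar) = F (γ * Pbar) := by
    simp only [integral_comp_of_map_eq_expMeasure hγ hX hmeas, F, mul_right_comm]
  have hRF : R = F (γM * Pbar) - F (γE * Pbar) := by
    rw [hR, hrate hM γM hγM hlawM, hrate hE γE hγE hlawE]
  have hmemM : γM * Pbar ∈ Ici 0 := mem_Ici.2 (by positivity)
  have hmemE : γE * Pbar ∈ Ici 0 := mem_Ici.2 (by positivity)
  have hR_nonpos (h : γM ≤ γE) : R ≤ 0 := by
    rw [hRF, sub_nonpos, hF.le_iff_le hmemM hmemE]; gcongr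
  refine ⟨fun h ↦ ?_, hR_nonpos, fun h ↦ max_eq_right (hR_nonpos h)⟩
  rw [hRF, sub_pos, hF.lt_iff_lt hmemE hmemM]; gcongr

/-- If `h_M, h_E` are independent exponential random variables with means
`γ̄_M, γ̄_E`, then for every `P̄ > 0` the receiver-CSI-only secrecy rate
`R = E[log(1+h_M P̄)] − E[log(1+h_E P̄)]` is positive if `γ̄_M > γ̄_E` and
nonpositive if `γ̄_M ≤ γ̄_E`; consequently `[R]⁺ = 0` whenever `γ̄_E ≥ γ̄_M`. -/
theorem receiver_csi_rate_sign {Ω : Type*} [MeasureSpace Ω] [IsProbabilityMeasure (ℙ : Measure Ω)]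
    (hM hE : Ω → ℝ) (γM γE Pbar : ℝ) (hγM : 0 < γM) (hγE : 0 < γE) (hPbar : 0 < Pbar)
    (hindep : IndepFun hM hE)
    (hlawM : Measure.map hM ℙ = expMeasure (1/γM))
    (hlawE : Measure.map hE ℙ = expMeasure (1/γE))
    (R : ℝ)
    (hR : R = (∫ ω, Real.log (1 + hM ω * Pbar)) - ∫ ω, Real.log (1 + hE ω * Pbar)) :
    (γE < γM → 0 < R) ∧ (γM ≤ γE → R ≤ 0) ∧ (γM ≤ γE → max R 0 = 0) :=
  receiver_csi_rate_sign_general hM hE γM γE Pbar hγM hγE hPbar hlawM hlawE R hR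
end

section
/- Combining the monotone limit and the upper bound: if h_M, h_E are independent with continuous bounded densities and E[h_M] < ∞, then the on/off constant-power scheme with threshold τ = 0 achieves, in the limit P̄ → ∞, the rate E[1_{h_M>h_E}·log(h_M/h_E)], which equals the P̄ → ∞ limit of the full-CSI secrecy capacity; i.e., lim_{P̄→∞} E[1_{h_M>h_E}·log((1/P̄+h_M)/(1/P̄+h_E))] = sup_{P̄} C_s^{(F)}(P̄) = E[1_{h_M>h_E}·log(h_M/h_E)]. -/
open MeasureTheory ProbabilityTheory

/-!
For `P > 0` the on/off rate is the rate of the constant policy `P`, hence achievable, and the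
rate `log ((1 + h_M q) / (1 + h_E q))` of any power `q ≥ 0` lies between `0` and
`log (h_M / h_E)` on `{h_E < h_M}`. So `onoff(P) ≤ C_s(P) ≤ E[1_{h_M>h_E} log (h_M / h_E)]`,
and the on/off rate tends to the right-hand side by dominated convergence. The dominating
function is integrable since `log (h_M / h_E) ≤ log⁺ h_M + log⁺ h_E⁻¹`, where
`log⁺ h_M ≤ |h_M|` and, for a law of `h_E` on `(0, ∞)` with density at most `C`,
`E[log⁺ h_E⁻¹] ≤ C ∫₀¹ |log y| dy`.
-/

open Real Set Filter Topology
open scoped ENNReal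

namespace Real

theorem posLog_le_abs (x : ℝ) : log⁺ x ≤ |x| := by
  rw [← posLog_abs]
  exact max_le (abs_nonneg x) (log_le_self (abs_nonneg x))

theorem posLog_inv_le_abs_log (y : ℝ) : log⁺ y⁻¹ ≤ |log y| := by
  rw [posLog_apply, log_inv]
  exact max_le (abs_nonneg _) (neg_le_abs _)

end Real

lemma MeasureTheory.Integrable.posLog {α : Type*} [MeasurableSpace α] {μ : Measure α}
    {f : α → ℝ} (hf : Integrable f μ) : Integrable (fun x => log⁺ (f x)) μ :=
  hf.norm.mono' (continuous_posLog.comp_aestronglyMeasurable hf.1)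
    (Eventually.of_forall fun x => by
      simpa [abs_of_nonneg posLog_nonneg] using posLog_le_abs (f x))

lemma ae_pos_withDensity_of_eq_zero_of_neg {μ : Measure ℝ} [NullSingletonClass μ]
    {g : ℝ → ℝ≥0∞} (hg : ∀ x < 0, g x = 0) : ∀ᵐ y ∂μ.withDensity g, 0 < y := by
  have hIic : {y : ℝ | ¬ 0 < y} = Iic 0 := by ext; simp
  rw [ae_iff, hIic, withDensity_apply _ measurableSet_Iic, ← setLIntegral_congr Iio_ae_eq_Iic,
    setLIntegral_congr_fun measurableSet_Iio hg, lintegral_zero]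

lemma withDensity_le_smul {α : Type*} [MeasurableSpace α] {μ : Measure α}
    {g : α → ℝ≥0∞} {C : ℝ≥0∞} (hg : ∀ x, g x ≤ C) : μ.withDensity g ≤ C • μ := by
  rw [← withDensity_const]
  exact withDensity_mono (Eventually.of_forall hg)

lemma integrable_posLog_inv_of_le_smul_volume {ν : Measure ℝ} {C : ℝ≥0∞} (hC : C ≠ ∞)
    (hν : ν ≤ C • volume) (hν0 : ∀ᵐ y ∂ν, 0 < y) : Integrable (fun y => log⁺ y⁻¹) ν := by
  have hlog : IntegrableOn log (Ioc 0 1) :=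
    (intervalIntegrable_iff_integrableOn_Ioc_of_le zero_le_one).1
      intervalIntegral.intervalIntegrable_log'
  have hbound : IntegrableOn (fun y => log⁺ y⁻¹) (Ioc 0 1) :=
    hlog.norm.mono' (by fun_prop) (Eventually.of_forall fun y => by
      simpa [abs_of_nonneg posLog_nonneg] using posLog_inv_le_abs_log y)
  have hrestrict : ν.restrict (Ioc 0 1) ≤ C • volume.restrict (Ioc 0 1) := by
    rw [← Measure.restrict_smul]
    exact Measure.restrict_mono le_rfl hν
  refine IntegrableOn.integrable_of_ae_notMem_eq_zero
    ((hbound.smul_measure hC).mono_measure hrestrict) ?_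
  filter_upwards [hν0] with y hy hy_notMem
  have hy1 : 1 < y := by simpa [hy] using hy_notMem
  rw [posLog_eq_zero_iff, abs_inv, abs_of_pos hy]
  exact inv_le_one_of_one_le₀ hy1.le

lemma iSup_Ioi_eq_of_tendsto {a c : ℝ → ℝ} {L : ℝ} (ha : Tendsto a atTop (𝓝 L))
    (hac : ∀ P > 0, a P ≤ c P) (hcL : ∀ P > 0, c P ≤ L) :
    ⨆ P : Ioi (0 : ℝ), c P = L := by
  have hbdd : BddAbove (range fun P : Ioi (0 : ℝ) => c P) := ⟨L, by
    rintro _ ⟨P, rfl⟩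
    exact hcL P P.2⟩
  refine le_antisymm (ciSup_le fun P => hcL P P.2) (le_of_tendsto ha ?_)
  filter_upwards [eventually_gt_atTop 0] with P hP
  exact (hac P hP).trans (le_ciSup hbdd ⟨P, hP⟩)

noncomputable section

/-- Channel gains `x = h_M`, `y = h_E`, transmit power `q`. -/
def secrecyRate (x y q : ℝ) : ℝ :=
  if y < x then log (1 + x * q) - log (1 + y * q) else 0

def secrecyRateLimit (x y : ℝ) : ℝ :=
  if y < x then log (x / y) else 0

/-- The on/off rate with threshold `τ = 0` at power `P`, in the form used in the paper. -/
def onOffRate (P x y : ℝ) : ℝ :=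
  if y < x then log ((1 / P + x) / (1 / P + y)) else 0

section Pointwise

variable {x y q P : ℝ}

lemma secrecyRate_nonneg (hy : 0 ≤ y) (hq : 0 ≤ q) : 0 ≤ secrecyRate x y q := by
  unfold secrecyRate
  split_ifs with hyx
  · exact sub_nonneg.2 (log_le_log (by positivity) (by gcongr))
  · exact le_rfl

lemma secrecyRate_le_secrecyRateLimit (hy : 0 < y) (hq : 0 ≤ q) :
    secrecyRate x y q ≤ secrecyRateLimit x y := by
  unfold secrecyRate secrecyRateLimit
  split_ifs with hyx
  · have hx : 0 < x := hy.trans hyx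
    rw [← log_div (by positivity) (by positivity)]
    refine log_le_log (by positivity) ?_
    rw [div_le_div_iff₀ (by positivity) hy]
    nlinarith
  · exact le_rfl

lemma secrecyRateLimit_nonneg (hy : 0 < y) : 0 ≤ secrecyRateLimit x y :=
  (secrecyRate_nonneg hy.le le_rfl).trans (secrecyRate_le_secrecyRateLimit hy le_rfl)

lemma secrecyRateLimit_le (hy : 0 < y) : secrecyRateLimit x y ≤ log⁺ x + log⁺ y⁻¹ := by
  unfold secrecyRateLimit
  split_ifs with hyx
  · calc log (x / y) = log x + log y⁻¹ := by
          rw [div_eq_mul_inv, log_mul (hy.trans hyx).ne' (inv_pos.2 hy).ne']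
      _ ≤ log⁺ x + log⁺ y⁻¹ := add_le_add (le_max_right _ _) (le_max_right _ _)
  · exact add_nonneg posLog_nonneg posLog_nonneg

lemma onOffRate_eq_secrecyRate (hP : 0 < P) (hy : 0 ≤ y) :
    onOffRate P x y = secrecyRate x y P := by
  unfold onOffRate secrecyRate
  split_ifs with hyx
  · have hx : 0 ≤ x := hy.trans hyx.le
    rw [← log_div (by positivity) (by positivity)]
    congr 1
    field_simp
  · rfl

lemma tendsto_onOffRate (hy : 0 < y) :
    Tendsto (fun P => onOffRate P x y) atTop (𝓝 (secrecyRateLimit x y)) := by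
  unfold onOffRate secrecyRateLimit
  split_ifs with hyx
  · have hinv : Tendsto (fun P : ℝ => 1 / P) atTop (𝓝 0) := by
      simpa using tendsto_inv_atTop_zero
    have hquot : Tendsto (fun P : ℝ => (1 / P + x) / (1 / P + y)) atTop (𝓝 (x / y)) := by
      have := (hinv.add_const x).div (hinv.add_const y) (by simpa using hy.ne')
      rwa [zero_add, zero_add] at this
    exact hquot.log (div_pos (hy.trans hyx) hy).ne'
  · exact tendsto_const_nhds

end Pointwise

section Channel

variable {Ω : Type*} [MeasureSpace Ω] {X Y : Ω → ℝ}

lemma integrable_secrecyRateLimit (hX : Measurable X) (hY : Measurable Y)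
    (hY0 : ∀ᵐ ω, 0 < Y ω) (hlogX : Integrable fun ω => log⁺ (X ω))
    (hlogY : Integrable fun ω => log⁺ (Y ω)⁻¹) :
    Integrable fun ω => secrecyRateLimit (X ω) (Y ω) := by
  have hmeas : Measurable fun ω => secrecyRateLimit (X ω) (Y ω) :=
    Measurable.ite (measurableSet_lt hY hX) (measurable_log.comp (hX.div hY)) measurable_const
  refine (hlogX.add hlogY).mono' hmeas.aestronglyMeasurable ?_
  filter_upwards [hY0] with ω hy
  rw [norm_of_nonneg (secrecyRateLimit_nonneg hy)]
  exact secrecyRateLimit_le hy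

lemma integral_secrecyRate_le (hY0 : ∀ᵐ ω, 0 < Y ω)
    (hint : Integrable fun ω => secrecyRateLimit (X ω) (Y ω)) {p : Ω → ℝ}
    (hp : ∀ ω, 0 ≤ p ω) :
    ∫ ω, secrecyRate (X ω) (Y ω) (p ω) ≤ ∫ ω, secrecyRateLimit (X ω) (Y ω) :=
  integral_mono_of_nonneg
    (by filter_upwards [hY0] with ω hy using secrecyRate_nonneg hy.le (hp ω)) hint
    (by filter_upwards [hY0] with ω hy using secrecyRate_le_secrecyRateLimit hy (hp ω))

lemma tendsto_integral_onOffRate (hX : Measurable X) (hY : Measurable Y)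
    (hY0 : ∀ᵐ ω, 0 < Y ω) (hint : Integrable fun ω => secrecyRateLimit (X ω) (Y ω)) :
    Tendsto (fun P => ∫ ω, onOffRate P (X ω) (Y ω)) atTop
      (𝓝 (∫ ω, secrecyRateLimit (X ω) (Y ω))) := by
  refine tendsto_integral_filter_of_dominated_convergence _ (Eventually.of_forall fun P => ?_)
    ?_ hint ?_
  · have hquot : Measurable fun ω => (1 / P + X ω) / (1 / P + Y ω) := by fun_prop
    exact (Measurable.ite (measurableSet_lt hY hX) (measurable_log.comp hquot)
      measurable_const).aestronglyMeasurable
  · filter_upwards [eventually_gt_atTop 0] with P hP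
    filter_upwards [hY0] with ω hy
    rw [onOffRate_eq_secrecyRate hP hy.le, norm_of_nonneg (secrecyRate_nonneg hy.le hP.le)]
    exact secrecyRate_le_secrecyRateLimit hy hP.le
  · filter_upwards [hY0] with ω hy using tendsto_onOffRate hy

/-- `C_s^{(F)}(P)` is the supremum of this set. -/
def achievableRates (X Y : Ω → ℝ) (P : ℝ) : Set ℝ :=
  {r | ∃ p : ℝ → ℝ → ℝ, Measurable (Function.uncurry p) ∧ (∀ a b, 0 ≤ p a b) ∧
    (∫ ω, p (X ω) (Y ω)) ≤ P ∧ r = ∫ ω, secrecyRate (X ω) (Y ω) (p (X ω) (Y ω))}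

lemma le_of_mem_achievableRates (hY0 : ∀ᵐ ω, 0 < Y ω)
    (hint : Integrable fun ω => secrecyRateLimit (X ω) (Y ω)) {P r : ℝ}
    (hr : r ∈ achievableRates X Y P) : r ≤ ∫ ω, secrecyRateLimit (X ω) (Y ω) := by
  obtain ⟨p, -, hp, -, rfl⟩ := hr
  exact integral_secrecyRate_le hY0 hint fun ω => hp _ _

lemma integral_onOffRate_mem_achievableRates [IsProbabilityMeasure (ℙ : Measure Ω)]
    (hY0 : ∀ᵐ ω, 0 < Y ω) {P : ℝ} (hP : 0 < P) :
    ∫ ω, onOffRate P (X ω) (Y ω) ∈ achievableRates X Y P := by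
  refine ⟨fun _ _ => P, measurable_const, fun _ _ => hP.le, by simp, integral_congr_ae ?_⟩
  filter_upwards [hY0] with ω hy using onOffRate_eq_secrecyRate hP hy.le

end Channel

end

theorem onoff_asymptotically_optimal_general {Ω : Type*} [MeasureSpace Ω]
    [IsProbabilityMeasure (ℙ : Measure Ω)]
    (X Y : Ω → ℝ) (g : ℝ → ℝ)
    (hXmeas : Measurable X) (hYmeas : Measurable Y)
    (hg_bdd : ∃ C, ∀ x, g x ≤ C)
    (hg_supp : ∀ x < (0:ℝ), g x = 0)
    (hlawY : Measure.map Y ℙ = volume.withDensity (fun x => ENNReal.ofReal (g x)))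
    (hXint : Integrable X (ℙ : Measure Ω))
    (Cs : ℝ → ℝ)
    (hCs : ∀ Pbar : ℝ, Cs Pbar = sSup {r : ℝ | ∃ p : ℝ → ℝ → ℝ,
      Measurable (Function.uncurry p) ∧ (∀ a b, 0 ≤ p a b) ∧
      (∫ ω, p (X ω) (Y ω)) ≤ Pbar ∧
      r = ∫ ω, if Y ω < X ω then
          Real.log (1 + X ω * p (X ω) (Y ω)) - Real.log (1 + Y ω * p (X ω) (Y ω))
        else 0}) :
    Filter.Tendsto
      (fun Pbar : ℝ =>
        ∫ ω, if Y ω < X ω then Real.log ((1/Pbar + X ω) / (1/Pbar + Y ω)) else 0)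
      Filter.atTop
      (nhds (∫ ω, if Y ω < X ω then Real.log (X ω / Y ω) else 0)) ∧
    (⨆ Pbar : Set.Ioi (0:ℝ), Cs Pbar)
      = ∫ ω, if Y ω < X ω then Real.log (X ω / Y ω) else 0 := by
  obtain ⟨C, hC⟩ := hg_bdd
  have hlawY_pos : ∀ᵐ y ∂Measure.map Y ℙ, 0 < y :=
    hlawY ▸ ae_pos_withDensity_of_eq_zero_of_neg fun x hx => by simp [hg_supp x hx]
  have hlawY_le : Measure.map Y ℙ ≤ ENNReal.ofReal C • volume :=
    hlawY ▸ withDensity_le_smul fun x => ENNReal.ofReal_le_ofReal (hC x)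
  have hY0 : ∀ᵐ ω, 0 < Y ω := ae_of_ae_map hYmeas.aemeasurable hlawY_pos
  have hlogY : Integrable fun ω => log⁺ (Y ω)⁻¹ :=
    (integrable_posLog_inv_of_le_smul_volume ENNReal.ofReal_ne_top hlawY_le
      hlawY_pos).comp_measurable hYmeas
  have hint := integrable_secrecyRateLimit hXmeas hYmeas hY0 hXint.posLog hlogY
  have hCs' : ∀ P, Cs P = sSup (achievableRates X Y P) := hCs
  have hbdd : ∀ P, BddAbove (achievableRates X Y P) := fun P =>
    ⟨_, fun r hr => le_of_mem_achievableRates hY0 hint hr⟩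
  have hlim := tendsto_integral_onOffRate hXmeas hYmeas hY0 hint
  refine ⟨hlim, iSup_Ioi_eq_of_tendsto hlim (fun P hP => ?_) (fun P hP => ?_)⟩
  · rw [hCs']
    exact le_csSup (hbdd P) (integral_onOffRate_mem_achievableRates hY0 hP)
  · rw [hCs']
    exact csSup_le ⟨_, integral_onOffRate_mem_achievableRates hY0 hP⟩
      fun r hr => le_of_mem_achievableRates hY0 hint hr

/-- If `h_M, h_E` are independent with continuous bounded densities and
`E[h_M] < ∞`, the on/off constant-power scheme with threshold `τ = 0` achieves,
in the limit `P̄ → ∞`, the rate `E[1_{h_M>h_E}·log(h_M/h_E)]`, which equals the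
supremum over `P̄` of the full-CSI secrecy capacity `C_s^{(F)}(P̄)`. -/
theorem onoff_asymptotically_optimal {Ω : Type*} [MeasureSpace Ω]
    [IsProbabilityMeasure (ℙ : Measure Ω)]
    (X Y : Ω → ℝ) (f g : ℝ → ℝ)
    (hXmeas : Measurable X) (hYmeas : Measurable Y)
    (hf_cont : Continuous f) (hg_cont : Continuous g)
    (hf_bdd : ∃ C, ∀ x, f x ≤ C) (hg_bdd : ∃ C, ∀ x, g x ≤ C)
    (hf_nonneg : ∀ x, 0 ≤ f x) (hg_nonneg : ∀ x, 0 ≤ g x)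
    (hf_supp : ∀ x < (0:ℝ), f x = 0) (hg_supp : ∀ x < (0:ℝ), g x = 0)
    (hlawX : Measure.map X ℙ = volume.withDensity (fun x => ENNReal.ofReal (f x)))
    (hlawY : Measure.map Y ℙ = volume.withDensity (fun x => ENNReal.ofReal (g x)))
    (hindep : IndepFun X Y)
    (hXint : Integrable X (ℙ : Measure Ω))
    (Cs : ℝ → ℝ)
    (hCs : ∀ Pbar : ℝ, Cs Pbar = sSup {r : ℝ | ∃ p : ℝ → ℝ → ℝ,
      Measurable (Function.uncurry p) ∧ (∀ a b, 0 ≤ p a b) ∧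
      (∫ ω, p (X ω) (Y ω)) ≤ Pbar ∧
      r = ∫ ω, if Y ω < X ω then
          Real.log (1 + X ω * p (X ω) (Y ω)) - Real.log (1 + Y ω * p (X ω) (Y ω))
        else 0}) :
    Filter.Tendsto
      (fun Pbar : ℝ =>
        ∫ ω, if Y ω < X ω then Real.log ((1/Pbar + X ω) / (1/Pbar + Y ω)) else 0)
      Filter.atTop
      (nhds (∫ ω, if Y ω < X ω then Real.log (X ω / Y ω) else 0)) ∧
    (⨆ Pbar : Set.Ioi (0:ℝ), Cs Pbar)
      = ∫ ω, if Y ω < X ω then Real.log (X ω / Y ω) else 0 :=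
  onoff_asymptotically_optimal_general X Y g hXmeas hYmeas hg_bdd hg_supp hlawY hXint Cs hCs
end

section
/- For fixed gains h_M > h_E > 0 and any λ > 0, the map P ↦ log(1+h_M P) − log(1+h_E P) − λP attains its maximum over P ≥ 0 at [P*]⁺ where P* = (1/2)[√((1/h_E − 1/h_M)² + (4/λ)(1/h_E − 1/h_M)) − (1/h_M + 1/h_E)], and the maximum value is nonnegative. -/
/-!
Along `P ≥ 0` the derivative of `log (1 + h_M P) - log (1 + h_E P) - λ P` equals
`(h_M - h_E - λ (1 + h_M P) (1 + h_E P)) / ((1 + h_M P) (1 + h_E P))`. The numerator is a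
quadratic with roots `P*` and `-P* - (1/h_M + 1/h_E) < 0`, so the derivative has the sign of
`P* - P`: the function increases up to `[P*]⁺` and decreases after it. The maximum value is
nonnegative because the function vanishes at `0`.
-/

open Real Set

theorem isMaxOn_Ici_max_of_deriv_sign {f : ℝ → ℝ} {a p : ℝ} (hf : ContinuousOn f (Ici a))
    (hd : DifferentiableOn ℝ f (Ioi a))
    (h_inc : ∀ x, a < x → x < p → 0 ≤ deriv f x)
    (h_dec : ∀ x, a < x → p < x → deriv f x ≤ 0) :
    IsMaxOn f (Ici a) (max p a) := by
  have ha : a ≤ max p a := le_max_right p a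
  have mono : MonotoneOn f (Icc a (max p a)) := by
    refine monotoneOn_of_deriv_nonneg (convex_Icc _ _) (hf.mono Icc_subset_Ici_self)
      (by rw [interior_Icc]; exact hd.mono Ioo_subset_Ioi_self) ?_
    rw [interior_Icc]
    rintro x ⟨hax, hxp⟩
    exact h_inc x hax ((lt_max_iff.mp hxp).resolve_right hax.not_gt)
  have anti : AntitoneOn f (Ici (max p a)) := by
    refine antitoneOn_of_deriv_nonpos (convex_Ici _) (hf.mono (Ici_subset_Ici.mpr ha))
      (by rw [interior_Ici]; exact hd.mono (Ioi_subset_Ioi ha)) ?_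
    rw [interior_Ici]
    intro x hpx
    exact h_dec x (ha.trans_lt hpx) ((le_max_left p a).trans_lt hpx)
  intro x (hx : a ≤ x)
  rcases le_total x (max p a) with hxp | hpx
  · exact mono ⟨hx, hxp⟩ ⟨ha, le_rfl⟩ hxp
  · exact anti (mem_Ici.2 le_rfl) hpx hpx

noncomputable def secrecyLagrangian (hM hE lam P : ℝ) : ℝ :=
  log (1 + hM * P) - log (1 + hE * P) - lam * P

noncomputable def waterFillingLevel (hM hE lam : ℝ) : ℝ :=
  (1/2) * (Real.sqrt ((1/hE - 1/hM)^2 + (4/lam) * (1/hE - 1/hM)) - (1/hM + 1/hE))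

theorem hasDerivAt_secrecyLagrangian {hM hE lam x : ℝ} (hMx : 1 + hM * x ≠ 0)
    (hEx : 1 + hE * x ≠ 0) :
    HasDerivAt (secrecyLagrangian hM hE lam) (hM / (1 + hM * x) - hE / (1 + hE * x) - lam) x := by
  have hlin : ∀ h : ℝ, HasDerivAt (fun P => 1 + h * P) h x := fun h => by
    simpa using ((hasDerivAt_id x).const_mul h).const_add 1
  have hlam : HasDerivAt (fun P => lam * P) lam x := by
    simpa using (hasDerivAt_id x).const_mul lam
  exact (((hlin hM).log hMx).sub ((hlin hE).log hEx)).sub hlam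

/-- `waterFillingLevel` is a root of the stationarity condition `λ (1 + h_M x) (1 + h_E x) = h_M - h_E`;
the other root is `-waterFillingLevel - (1/h_M + 1/h_E)`. -/
theorem waterFillingLevel_factorization {hM hE lam : ℝ} (hM0 : hM ≠ 0) (hE0 : hE ≠ 0)
    (hlam : lam ≠ 0) (hdisc : 0 ≤ (1/hE - 1/hM)^2 + (4/lam) * (1/hE - 1/hM)) (x : ℝ) :
    lam * (1 + hM * x) * (1 + hE * x) - (hM - hE) =
      lam * hM * hE * (x - waterFillingLevel hM hE lam) *
        (x + waterFillingLevel hM hE lam + (1/hM + 1/hE)) := by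
  have hs := Real.sq_sqrt hdisc
  unfold waterFillingLevel
  generalize Real.sqrt _ = s at hs ⊢
  field_simp at hs ⊢
  linear_combination hs

theorem exists_pos_deriv_secrecyLagrangian_eq {hM hE lam x : ℝ} (hE_pos : 0 < hE)
    (h_lt : hE < hM) (hlam : 0 < lam) (hx : 0 ≤ x) :
    ∃ c > 0, deriv (secrecyLagrangian hM hE lam) x = c * (waterFillingLevel hM hE lam - x) := by
  have hM_pos := hE_pos.trans h_lt
  have hMx : 0 < 1 + hM * x := by positivity
  have hEx : 0 < 1 + hE * x := by positivity
  have hgap : 0 < 1/hE - 1/hM := sub_pos.2 (one_div_lt_one_div_of_lt hE_pos h_lt)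
  have hfac := waterFillingLevel_factorization hM_pos.ne' hE_pos.ne' hlam.ne' (by positivity) x
  have hroot : 0 < x + waterFillingLevel hM hE lam + (1/hM + 1/hE) := by
    have := Real.sqrt_nonneg ((1/hE - 1/hM)^2 + (4/lam) * (1/hE - 1/hM))
    have : 0 < 1/hM + 1/hE := by positivity
    unfold waterFillingLevel
    linarith
  refine ⟨lam * hM * hE * (x + waterFillingLevel hM hE lam + (1/hM + 1/hE)) /
      ((1 + hM * x) * (1 + hE * x)), by positivity, ?_⟩
  rw [(hasDerivAt_secrecyLagrangian hMx.ne' hEx.ne').deriv]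
  generalize 1/hM + 1/hE = b at hfac ⊢
  field_simp
  linear_combination (-1) * hfac

/-- For fixed gains `h_M > h_E > 0` and any `λ > 0`, the map
`P ↦ log(1+h_M P) − log(1+h_E P) − λP` attains its maximum over `P ≥ 0`
at `[P*]⁺` with `P* = (1/2)[√((1/h_E − 1/h_M)² + (4/λ)(1/h_E − 1/h_M)) − (1/h_M + 1/h_E)]`,
and the maximum value is nonnegative. -/
theorem lagrangian_maximized_at_water_filling (hM hE lam : ℝ)
    (hE_pos : 0 < hE) (h_lt : hE < hM) (hlam : 0 < lam)
    (Pstar : ℝ)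
    (hPdef : Pstar = (1/2) * (Real.sqrt ((1/hE - 1/hM)^2 + (4/lam) * (1/hE - 1/hM))
      - (1/hM + 1/hE))) :
    (∀ P ∈ Set.Ici (0 : ℝ),
        Real.log (1 + hM * P) - Real.log (1 + hE * P) - lam * P
          ≤ Real.log (1 + hM * max Pstar 0) - Real.log (1 + hE * max Pstar 0)
            - lam * max Pstar 0) ∧
    0 ≤ Real.log (1 + hM * max Pstar 0) - Real.log (1 + hE * max Pstar 0)
        - lam * max Pstar 0 := by
  have hasDeriv : ∀ x, 0 ≤ x → HasDerivAt (secrecyLagrangian hM hE lam) _ x := fun x hx =>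
    hasDerivAt_secrecyLagrangian (by nlinarith) (by nlinarith)
  have hmax : IsMaxOn (secrecyLagrangian hM hE lam) (Ici 0) (max Pstar 0) := by
    rw [hPdef]
    refine isMaxOn_Ici_max_of_deriv_sign
      (fun x hx => (hasDeriv x hx).continuousAt.continuousWithinAt)
      (fun x hx => (hasDeriv x hx.le).differentiableAt.differentiableWithinAt) ?_ ?_
    · intro x hx hxP
      obtain ⟨c, hc, hderiv⟩ := exists_pos_deriv_secrecyLagrangian_eq hE_pos h_lt hlam hx.le
      exact hderiv ▸ mul_nonneg hc.le (sub_nonneg.2 hxP.le)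
    · intro x hx hPx
      obtain ⟨c, hc, hderiv⟩ := exists_pos_deriv_secrecyLagrangian_eq hE_pos h_lt hlam hx.le
      exact hderiv ▸ mul_nonpos_of_nonneg_of_nonpos hc.le (sub_nonpos.2 hPx.le)
  refine ⟨fun P hP => hmax hP, ?_⟩
  simpa [secrecyLagrangian] using hmax (mem_Ici.2 le_rfl)
end
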